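/- arXiv:1907.03793 — 2 statements merged into one kernel-verified Lean document; each statement's English description precedes it below -/
import Mathlib

section
/- Let $f$ be $L$-smooth, $\psi$ proper, closed, convex, $F=f+\psi$. Given $x_t$, $v_t\in\mathbb{R}^p$, $\eta_t>0$, $\gamma_t\in(0,1]$, set $\hat{x}_{t+1}:=\mathrm{prox}_{\eta_t\psi}(x_t-\eta_t v_t)$ and $x_{t+1}:=(1-\gamma_t)x_t+\gamma_t\hat{x}_{t+1}$. Then $F(x_{t+1}) \leq F(x_t) + \gamma_t\langle\nabla f(x_t)-v_t,\hat{x}_{t+1}-x_t\rangle - \big(\frac{\gamma_t}{\eta_t}-\frac{L\gamma_t^2}{2}\big)\|\hat{x}_{t+1}-x_t\|^2$. -/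
open RealInnerProductSpace

section Aux

variable {E : Type*} [NormedAddCommGroup E] [InnerProductSpace ℝ E] [CompleteSpace E]

lemma le_zero_of_forall_Ioc (A C : ℝ) (hC : 0 ≤ C)
    (h : ∀ s ∈ Set.Ioc (0:ℝ) 1, A ≤ s * C) : A ≤ 0 := by
  by_contra hpos
  push_neg at hpos
  have hAC : A ≤ C := by simpa using h 1 (by norm_num)
  have hCpos : 0 < C := lt_of_lt_of_le hpos hAC
  have hs : A / (2 * C) ∈ Set.Ioc (0:ℝ) 1 := by
    constructor
    · positivity
    · rw [div_le_one (by linarith)]; linarith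
  have h2 := h _ hs
  have h3 : A / (2 * C) * C = A / 2 := by field_simp
  rw [h3] at h2
  linarith

/-- Descent lemma: if `f` has `L`-Lipschitz gradient `g`, then
`f y ≤ f x + ⟪g x, y - x⟫ + L/2 ‖y - x‖²`. -/
lemma descent_lemma (f : E → ℝ) (g : E → E)
    (hf : ∀ x, HasGradientAt f (g x) x) (L : ℝ) (hL : 0 ≤ L)
    (hLip : ∀ x y, ‖g x - g y‖ ≤ L * ‖x - y‖) (x y : E) :
    f y ≤ f x + ⟪g x, y - x⟫ + L / 2 * ‖y - x‖ ^ 2 := by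
  set d := y - x with hd
  have hgcont : Continuous g := by
    have : LipschitzWith (Real.toNNReal L) g := by
      intro a b
      rw [edist_nndist, edist_nndist, ← ENNReal.coe_mul, ENNReal.coe_le_coe,
        ← NNReal.coe_le_coe]
      push_cast
      rw [Real.coe_toNNReal _ hL, dist_eq_norm, dist_eq_norm]
      exact hLip a b
    exact this.continuous
  have hline : ∀ t : ℝ, HasDerivAt (fun t : ℝ => f (x + t • d)) ⟪g (x + t • d), d⟫ t := by
    intro t
    have h1 : HasDerivAt (fun t : ℝ => x + t • d) d t := by
      simpa using ((hasDerivAt_id t).smul_const d).const_add x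
    have h2 := (hf (x + t • d)).hasFDerivAt
    have := h2.comp_hasDerivAt t h1
    exact (by simpa using this : HasDerivAt (f ∘ fun t : ℝ => x + t • d) ⟪g (x + t • d), d⟫ t)
  have hcont : Continuous fun t : ℝ => ⟪g (x + t • d), d⟫ :=
    Continuous.inner (hgcont.comp (by continuity)) continuous_const
  have hint : IntervalIntegrable (fun t : ℝ => ⟪g (x + t • d), d⟫)
      MeasureTheory.volume 0 1 := hcont.intervalIntegrable 0 1
  have hftc : ∫ t in (0:ℝ)..1, ⟪g (x + t • d), d⟫ = f (x + (1:ℝ) • d) - f (x + (0:ℝ) • d) :=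
    intervalIntegral.integral_eq_sub_of_hasDerivAt (fun t _ => hline t) hint
  have hxy : f y - f x = ∫ t in (0:ℝ)..1, ⟪g (x + t • d), d⟫ := by
    rw [hftc]; simp [hd]
  have hbound : ∀ t ∈ Set.Icc (0:ℝ) 1,
      ⟪g (x + t • d), d⟫ ≤ ⟪g x, d⟫ + L * t * ‖d‖ ^ 2 := by
    intro t ht
    have h1 : ⟪g (x + t • d) - g x, d⟫ ≤ ‖g (x + t • d) - g x‖ * ‖d‖ :=
      real_inner_le_norm _ _
    have h2 : ‖g (x + t • d) - g x‖ ≤ L * (t * ‖d‖) := by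
      have := hLip (x + t • d) x
      simpa [norm_smul, abs_of_nonneg ht.1, mul_assoc] using this
    have h3 : ‖g (x + t • d) - g x‖ * ‖d‖ ≤ L * (t * ‖d‖) * ‖d‖ :=
      mul_le_mul_of_nonneg_right h2 (norm_nonneg d)
    have h4 : ⟪g (x + t • d) - g x, d⟫ = ⟪g (x + t • d), d⟫ - ⟪g x, d⟫ :=
      inner_sub_left _ _ _
    nlinarith [h1, h3, h4]
  have hmono : ∫ t in (0:ℝ)..1, ⟪g (x + t • d), d⟫
      ≤ ∫ t in (0:ℝ)..1, (⟪g x, d⟫ + L * t * ‖d‖ ^ 2) := by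
    apply intervalIntegral.integral_mono_on (by norm_num) hint
    · exact Continuous.intervalIntegrable (by continuity) 0 1
    · exact hbound
  have hval : ∫ t in (0:ℝ)..1, (⟪g x, d⟫ + L * t * ‖d‖ ^ 2)
      = ⟪g x, d⟫ + L / 2 * ‖d‖ ^ 2 := by
    have heq : (fun t : ℝ => ⟪g x, d⟫ + L * t * ‖d‖ ^ 2)
        = fun t : ℝ => ⟪g x, d⟫ + (L * ‖d‖ ^ 2) * t := by
      funext t; ring
    rw [heq, intervalIntegral.integral_add
        (intervalIntegrable_const)
        (Continuous.intervalIntegrable (by continuity) 0 1),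
      intervalIntegral.integral_const_mul, integral_id]
    simp
    ring
  have hfinal : f y - f x ≤ ⟪g x, d⟫ + L / 2 * ‖d‖ ^ 2 := by
    rw [hxy, ← hval]; exact hmono
  linarith [hfinal]

end Aux

set_option maxHeartbeats 1000000 in
/-- One-iteration descent inequality of the proximal hybrid SGD step:
`F(x_{t+1}) ≤ F(x_t) + γ⟨∇f(x_t) - v_t, x̂ - x_t⟩ - (γ/η - Lγ²/2)‖x̂ - x_t‖²`. -/
theorem one_iteration_descent {p : ℕ}
    (ψ : EuclideanSpace ℝ (Fin p) → ℝ)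
    (hψconv : ConvexOn ℝ Set.univ ψ) (hψcl : LowerSemicontinuous ψ)
    (f : EuclideanSpace ℝ (Fin p) → ℝ)
    (gradf : EuclideanSpace ℝ (Fin p) → EuclideanSpace ℝ (Fin p))
    (hf : ∀ x, HasGradientAt f (gradf x) x)
    (L : ℝ) (hL : 0 < L)
    (hLip : ∀ x y, ‖gradf x - gradf y‖ ≤ L * ‖x - y‖)
    (η γ : ℝ) (hη : 0 < η) (hγ : γ ∈ Set.Ioc (0 : ℝ) 1)
    (x v xhat xnext : EuclideanSpace ℝ (Fin p))
    (hprox : ∀ u, ψ xhat + (1 / (2 * η)) * ‖xhat - (x - η • v)‖ ^ 2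
        ≤ ψ u + (1 / (2 * η)) * ‖u - (x - η • v)‖ ^ 2)
    (hnext : xnext = (1 - γ) • x + γ • xhat) :
    f xnext + ψ xnext
      ≤ f x + ψ x + γ * ⟪gradf x - v, xhat - x⟫
        - (γ / η - L * γ ^ 2 / 2) * ‖xhat - x‖ ^ 2 := by
  obtain ⟨hγ0, hγ1⟩ := hγ
  set d := xhat - x with hd
  -- Step 1: descent lemma for f
  have hxnext : xnext - x = γ • d := by
    rw [hnext, hd]
    module
  have hdesc : f xnext ≤ f x + γ * ⟪gradf x, d⟫ + L * γ ^ 2 / 2 * ‖d‖ ^ 2 := by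
    have h := descent_lemma f gradf hf L hL.le hLip x xnext
    rw [hxnext] at h
    have h1 : ⟪gradf x, γ • d⟫ = γ * ⟪gradf x, d⟫ := real_inner_smul_right _ _ _
    have h2 : ‖γ • d‖ ^ 2 = γ ^ 2 * ‖d‖ ^ 2 := by
      rw [norm_smul, mul_pow, Real.norm_eq_abs, sq_abs]
    rw [h1, h2] at h
    nlinarith [h]
  -- Step 2: prox inequality gives ψ xhat ≤ ψ x - ⟪v, d⟫ - (1/η) ‖d‖²
  have hψhat : ψ xhat ≤ ψ x - ⟪v, d⟫ - (1 / η) * ‖d‖ ^ 2 := by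
    set w : EuclideanSpace ℝ (Fin p) := xhat - (x - η • v) with hw
    have hwd : ⟪w, d⟫ = ‖d‖ ^ 2 + η * ⟪v, d⟫ := by
      rw [hw, hd]
      have heq : xhat - (x - η • v) = (xhat - x) + η • v := by module
      rw [heq, inner_add_left, real_inner_smul_left, real_inner_self_eq_norm_sq,
        real_inner_comm]
    have key : ∀ s ∈ Set.Ioc (0:ℝ) 1,
        ψ xhat - ψ x + (1 / η) * ⟪w, d⟫ ≤ s * (‖d‖ ^ 2 / (2 * η)) := by
      intro s hs
      set u : EuclideanSpace ℝ (Fin p) := (1 - s) • xhat + s • x with hu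
      have hconv : ψ u ≤ (1 - s) * ψ xhat + s * ψ x :=
        hψconv.2 (Set.mem_univ xhat) (Set.mem_univ x) (by linarith [hs.2])
          hs.1.le (by ring)
      have hunorm : ‖u - (x - η • v)‖ ^ 2
          = ‖w‖ ^ 2 - 2 * (s * ⟪w, d⟫) + s ^ 2 * ‖d‖ ^ 2 := by
        have heq : u - (x - η • v) = w - s • d := by
          rw [hu, hw, hd]; module
        rw [heq, @norm_sub_sq_real, real_inner_smul_right, norm_smul, mul_pow,
          Real.norm_eq_abs, sq_abs]
      have hP := hprox u
      rw [hunorm] at hP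
      have hs' : 0 < s := hs.1
      have e1 : (1 / (2 * η)) * (2 * (s * ⟪w, d⟫)) = s * ((1 / η) * ⟪w, d⟫) := by
        field_simp
      have e2 : (1 / (2 * η)) * (s ^ 2 * ‖d‖ ^ 2) = s * (s * (‖d‖ ^ 2 / (2 * η))) := by
        field_simp
      nlinarith [hP, hconv, hs', e1, e2, mul_pos hs' hs']
    have hA0 := le_zero_of_forall_Ioc _ _ (by positivity) key
    rw [hwd] at hA0
    have hcancel : (1 / η) * (η * ⟪v, d⟫) = ⟪v, d⟫ := by
      rw [one_div, inv_mul_cancel_left₀ hη.ne']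
    nlinarith [hA0, hcancel]
  -- Step 3: convexity of ψ at xnext
  have hψnext : ψ xnext ≤ (1 - γ) * ψ x + γ * ψ xhat := by
    rw [hnext]
    exact hψconv.2 (Set.mem_univ x) (Set.mem_univ xhat) (by linarith) hγ0.le (by ring)
  -- Combine
  have hinner : ⟪gradf x - v, d⟫ = ⟪gradf x, d⟫ - ⟪v, d⟫ := inner_sub_left _ _ _
  have hηcancel : γ * ((1 / η) * ‖d‖ ^ 2) = (γ / η) * ‖d‖ ^ 2 := by ring
  nlinarith [hdesc, hψnext, hinner, hηcancel,
    mul_le_mul_of_nonneg_left hψhat hγ0.le]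
end

section
/- Let $L>0$, $\delta>0$, $\epsilon>0$, $\omega\in(0,1)$, and let $\gamma_m:=\frac{\delta}{L}$, $\gamma_t:=\frac{\delta}{L+\epsilon L^2[\omega\gamma_{t+1}+\omega^2\gamma_{t+2}+\dots+\omega^{m-t}\gamma_m]}$ for $t=0,\dots,m-1$. Then the sum $\Sigma_m:=\sum_{t=0}^m\gamma_t$ satisfies $\Sigma_m \geq \frac{\delta(m+1)\sqrt{1-\omega}}{L[\sqrt{1-\omega}+\sqrt{1-\omega+4\delta\omega\epsilon}]}$. -/
/-- Lower bound on the sum of the adaptive step sizes (Lemma A.1, second part):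
`Σ_m = ∑_{t=0}^m γ_t ≥ δ(m+1)√(1-ω) / (L[√(1-ω) + √(1-ω+4δωε)])`. -/
theorem adaptive_stepsize_sum_lower_bound (L δ ε ω : ℝ)
    (hL : 0 < L) (hδ : 0 < δ) (hε : 0 < ε) (hω : ω ∈ Set.Ioo (0 : ℝ) 1)
    (m : ℕ) (γ : ℕ → ℝ)
    (hγm : γ m = δ / L)
    (hγt : ∀ t, t < m →
      γ t = δ / (L + ε * L ^ 2 * ∑ i ∈ Finset.Icc (t + 1) m, ω ^ (i - t) * γ i)) :
    ∑ t ∈ Finset.range (m + 1), γ t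
      ≥ δ * (m + 1) * Real.sqrt (1 - ω)
        / (L * (Real.sqrt (1 - ω) + Real.sqrt (1 - ω + 4 * δ * ω * ε))) := by
  obtain ⟨hω0, hω1⟩ := hω
  have h1ω : (0:ℝ) < 1 - ω := by linarith
  set S : ℕ → ℝ := fun t => ∑ i ∈ Finset.Icc (t + 1) m, ω ^ (i - t) * γ i with hSdef
  set b : ℕ → ℝ := fun t => L + ε * L ^ 2 * S t with hbdef
  -- positivity of γ
  have hpos : ∀ j t, t ≤ m → m - t ≤ j → 0 < γ t := by
    intro j
    induction j with
    | zero =>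
      intro t ht h0
      have : t = m := by omega
      subst this
      rw [hγm]; positivity
    | succ j ih =>
      intro t ht hle
      rcases eq_or_lt_of_le ht with h | h
      · subst h; rw [hγm]; positivity
      · have hSnn : 0 ≤ S t := by
          apply Finset.sum_nonneg
          intro i hi
          rw [Finset.mem_Icc] at hi
          have := ih i hi.2 (by omega)
          positivity
        have hden : 0 < L + ε * L ^ 2 * S t := by
          nlinarith [mul_nonneg (by positivity : (0:ℝ) ≤ ε * L ^ 2) hSnn]
        rw [hγt t h]
        exact div_pos hδ hden
  have hpos' : ∀ t, t ≤ m → 0 < γ t := fun t ht => hpos m t ht (Nat.sub_le m t)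
  have hSnn : ∀ t, 0 ≤ S t := by
    intro t
    apply Finset.sum_nonneg
    intro i hi
    rw [Finset.mem_Icc] at hi
    have := hpos' i hi.2
    positivity
  have hbpos : ∀ t, 0 < b t := by
    intro t
    have h1 := hSnn t
    have h2 : 0 ≤ ε * L ^ 2 * S t := mul_nonneg (by positivity) h1
    simp only [hbdef]
    linarith
  have hγb : ∀ t, t ≤ m → γ t * b t = δ := by
    intro t ht
    rcases eq_or_lt_of_le ht with h | h
    · rw [h]
      have hSm : S m = 0 := by
        simp only [hSdef]
        rw [Finset.Icc_eq_empty (by omega)]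
        exact Finset.sum_empty
      simp only [hbdef, hSm, hγm]
      rw [mul_zero, add_zero]
      exact div_mul_cancel₀ δ hL.ne'
    · have hb := hbpos t
      simp only [hbdef, hSdef] at hb ⊢
      rw [hγt t h]
      exact div_mul_cancel₀ δ hb.ne'
  set n := m + 1 with hn
  set P := ∑ t ∈ Finset.range n, γ t with hPdef
  have hPpos : 0 < P :=
    Finset.sum_pos (fun t ht => hpos' t (by rw [Finset.mem_range] at ht; omega))
      ⟨0, by simp [hn]⟩
  -- Chebyshev
  have key : 0 ≤ ∑ s ∈ Finset.range n, ∑ t ∈ Finset.range n, (γ s - γ t) * (b t - b s) := by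
    apply Finset.sum_nonneg; intro s hs
    apply Finset.sum_nonneg; intro t ht
    rw [Finset.mem_range] at hs ht
    have hbs := hbpos s; have hbt := hbpos t
    have h1 := hγb s (by omega); have h2 := hγb t (by omega)
    have hexp : (γ s - γ t) * (b t - b s) * (b s * b t) = δ * (b t - b s) ^ 2 := by
      linear_combination (b t ^ 2 - b s * b t) * h1 + (b s ^ 2 - b s * b t) * h2
    have h0 : 0 ≤ (γ s - γ t) * (b t - b s) * (b s * b t) := by
      rw [hexp]; exact mul_nonneg hδ.le (sq_nonneg _)
    exact nonneg_of_mul_nonneg_left h0 (mul_pos hbs hbt)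
  have expand2 : ∑ s ∈ Finset.range n, ∑ t ∈ Finset.range n, (γ s - γ t) * (b t - b s)
      = 2 * (P * ∑ t ∈ Finset.range n, b t)
        - 2 * ((n : ℝ) * ∑ t ∈ Finset.range n, γ t * b t) := by
    have hinner : ∀ s ∈ Finset.range n, ∑ t ∈ Finset.range n, (γ s - γ t) * (b t - b s)
        = γ s * (∑ t ∈ Finset.range n, b t) + (∑ t ∈ Finset.range n, γ t) * b s
          - (n : ℝ) * (γ s * b s) - (∑ t ∈ Finset.range n, γ t * b t) := by
      intro s _
      have e : ∀ t ∈ Finset.range n, (γ s - γ t) * (b t - b s)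
          = γ s * b t + γ t * b s - γ s * b s - γ t * b t := fun t _ => by ring
      rw [Finset.sum_congr rfl e]
      simp only [Finset.sum_sub_distrib, Finset.sum_add_distrib, ← Finset.mul_sum,
        ← Finset.sum_mul, Finset.sum_const, Finset.card_range, nsmul_eq_mul]
      ring
    rw [Finset.sum_congr rfl hinner]
    simp only [Finset.sum_sub_distrib, Finset.sum_add_distrib, ← Finset.mul_sum,
      ← Finset.sum_mul, Finset.sum_const, Finset.card_range, nsmul_eq_mul]
    ring
  have hab : ∑ t ∈ Finset.range n, γ t * b t = (n : ℝ) * δ := by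
    rw [Finset.sum_congr rfl (fun t ht => hγb t (by rw [Finset.mem_range] at ht; omega))]
    simp [Finset.sum_const, Finset.card_range]
  have cheb : (n : ℝ) * ((n : ℝ) * δ) ≤ P * ∑ t ∈ Finset.range n, b t := by
    rw [hab] at expand2
    linarith [key.trans_eq expand2]
  -- sum of b
  have hbsum : ∑ t ∈ Finset.range n, b t
      = (n : ℝ) * L + ε * L ^ 2 * ∑ t ∈ Finset.range n, S t := by
    simp only [hbdef]
    rw [Finset.sum_add_distrib, Finset.sum_const, Finset.card_range, ← Finset.mul_sum]
    push_cast
    ring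
  -- swap the double sum
  have hswap : ∑ t ∈ Finset.range n, S t
      = ∑ i ∈ Finset.range n, ∑ t ∈ Finset.range n,
          (if i ∈ Finset.Icc (t + 1) m then ω ^ (i - t) * γ i else 0) := by
    rw [Finset.sum_comm]
    apply Finset.sum_congr rfl
    intro t _
    simp only [hSdef]
    rw [Finset.sum_ite_mem]
    rw [Finset.inter_eq_right.mpr]
    intro i hi
    rw [Finset.mem_Icc] at hi
    rw [Finset.mem_range]
    omega
  have hinner2 : ∀ i ∈ Finset.range n,
      (1 - ω) * ∑ t ∈ Finset.range n,
        (if i ∈ Finset.Icc (t + 1) m then ω ^ (i - t) * γ i else 0) ≤ ω * γ i := by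
    intro i hi
    rw [Finset.mem_range] at hi
    have him : i ≤ m := by omega
    have e1 : ∀ t ∈ Finset.range n, (if i ∈ Finset.Icc (t + 1) m then ω ^ (i - t) * γ i else 0)
        = (if t ∈ Finset.range i then ω ^ (i - t) * γ i else 0) := by
      intro t _
      have hiff : (i ∈ Finset.Icc (t + 1) m) ↔ (t ∈ Finset.range i) := by
        simp only [Finset.mem_Icc, Finset.mem_range]
        omega
      simp only [hiff]
    rw [Finset.sum_congr rfl e1, Finset.sum_ite_mem,
      Finset.inter_eq_right.mpr (Finset.range_subset_range.mpr (by omega))]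
    have hr : ∑ t ∈ Finset.range i, ω ^ (i - t) = (∑ j ∈ Finset.range i, ω ^ j) * ω := by
      rw [← Finset.sum_range_reflect (fun t => ω ^ (i - t)) i, Finset.sum_mul]
      apply Finset.sum_congr rfl
      intro j hj
      rw [Finset.mem_range] at hj
      rw [← pow_succ]
      congr 1
      omega
    have hfact : ∑ t ∈ Finset.range i, ω ^ (i - t) * γ i
        = ((∑ j ∈ Finset.range i, ω ^ j) * ω) * γ i := by
      rw [← Finset.sum_mul, hr]
    rw [hfact]
    have hs2 : (1 - ω) * ∑ j ∈ Finset.range i, ω ^ j = 1 - ω ^ i := by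
      linear_combination -geom_sum_mul ω i
    have hγi := (hpos' i him).le
    have hωi : 0 ≤ ω ^ i := pow_nonneg hω0.le i
    have heq : (1 - ω) * ((∑ j ∈ Finset.range i, ω ^ j) * ω * γ i)
        = (1 - ω ^ i) * (ω * γ i) := by
      linear_combination (ω * γ i) * hs2
    rw [heq]
    exact mul_le_of_le_one_left (mul_nonneg hω0.le hγi) (by nlinarith)
  have hSsum : (1 - ω) * ∑ t ∈ Finset.range n, S t ≤ ω * P := by
    rw [hswap, Finset.mul_sum]
    refine le_trans (Finset.sum_le_sum hinner2) ?_
    rw [hPdef, Finset.mul_sum]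
  -- the quadratic inequality
  have hquad : δ * (n : ℝ) ^ 2 * (1 - ω) ≤ L * P * (n : ℝ) * (1 - ω) + ε * L ^ 2 * ω * P ^ 2 := by
    rw [hbsum] at cheb
    have c2 := mul_le_mul_of_nonneg_right cheb h1ω.le
    have c3 := mul_le_mul_of_nonneg_left hSsum (by positivity : (0:ℝ) ≤ ε * L ^ 2 * P)
    nlinarith [c2, c3]

  -- final algebra
  clear_value S b P n
  set u := Real.sqrt (1 - ω) with hudef
  set v := Real.sqrt (1 - ω + 4 * δ * ω * ε) with hvdef
  have hu2 : u ^ 2 = 1 - ω := Real.sq_sqrt h1ω.le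
  have hδωε : 0 < δ * ω * ε := mul_pos (mul_pos hδ hω0) hε
  have hv2 : v ^ 2 = 1 - ω + 4 * δ * ω * ε := Real.sq_sqrt (by linarith)
  have hu0 : 0 < u := Real.sqrt_pos.mpr h1ω
  have hv0 : 0 < v := Real.sqrt_pos.mpr (by linarith)
  have huv : u < v := by
    rw [hudef, hvdef]
    apply Real.sqrt_lt_sqrt h1ω.le
    linarith
  have hnpos : (0:ℝ) < (n : ℝ) := by rw [hn]; positivity
  clear_value u v
  have hident : (L * P * (v - u) + 2 * δ * (n : ℝ) * u) * (L * P * (u + v) - 2 * δ * (n : ℝ) * u)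
      = 4 * δ * (L * P * (n : ℝ) * (1 - ω) + ε * L ^ 2 * ω * P ^ 2 - δ * (n : ℝ) ^ 2 * (1 - ω)) := by
    linear_combination (L ^ 2 * P ^ 2) * hv2
      + (-(L ^ 2 * P ^ 2) + 4 * δ * (n : ℝ) * L * P - 4 * δ ^ 2 * (n : ℝ) ^ 2) * hu2
  have hfac : 0 ≤ (L * P * (v - u) + 2 * δ * (n : ℝ) * u) * (L * P * (u + v) - 2 * δ * (n : ℝ) * u) := by
    rw [hident]
    have hslack : (0:ℝ) ≤ L * P * (n : ℝ) * (1 - ω) + ε * L ^ 2 * ω * P ^ 2 - δ * (n : ℝ) ^ 2 * (1 - ω) := by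
      linarith
    linarith [mul_nonneg hδ.le hslack]
  have hfirst : 0 < L * P * (v - u) + 2 * δ * (n : ℝ) * u := by
    have h1 : 0 < L * P * (v - u) := mul_pos (mul_pos hL hPpos) (by linarith)
    have h2 : 0 < δ * (n : ℝ) * u := mul_pos (mul_pos hδ hnpos) hu0
    linarith
  have h3 : 2 * δ * (n : ℝ) * u ≤ L * P * (u + v) := by
    rcases le_or_gt (2 * δ * (n : ℝ) * u) (L * P * (u + v)) with h | h
    · exact h
    · exfalso
      have : (L * P * (v - u) + 2 * δ * (n : ℝ) * u) * (L * P * (u + v) - 2 * δ * (n : ℝ) * u) < 0 :=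
        mul_neg_of_pos_of_neg hfirst (by linarith)
      linarith
  have hden : (0:ℝ) < L * (u + v) := by positivity
  rw [ge_iff_le, div_le_iff₀ hden]
  have hcast : ((m : ℝ) + 1) = (n : ℝ) := by rw [hn]; push_cast; ring
  rw [hcast]
  have h4 : 0 < δ * (n : ℝ) * u := mul_pos (mul_pos hδ hnpos) hu0
  linarith [h3, h4]
end
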